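/- Let p, n ≥ 1, let S = (S_0, …, S_{2n}) be a truncated matrix moment sequence whose moment matrix M(n) is positive definite, and suppose x_1, …, x_ℓ ∈ ℝ are pairwise distinct, A_1, …, A_ℓ are nonzero positive semidefinite symmetric p×p matrices with S_i = Σ_{j=1}^ℓ x_j^i A_j for 0 ≤ i ≤ 2n and Σ_{j=1}^ℓ rank A_j = (n+1)p, and x_1 = t with rank A_1 = m. Define S̃_i := Σ_{j=2}^ℓ x_j^i A_j for 0 ≤ i ≤ 2n+2, and let M_S̃(n) = (S̃_{i+j−2})_{i,j=1}^{n+1} and M_S̃(n+1) = (S̃_{i+j−2})_{i,j=1}^{n+2}. Then rank M_S̃(n) = rank M_S̃(n+1) = (n+1)p − m. -/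

import Mathlib

/-!
The moment matrix of a single atom `c` with mass `A` factors as `V A Vᵀ`, so its rank is at
most `rank A`; by subadditivity of rank, `rank M_S̃(k) ≤ ∑_{j ≥ 2} rank A_j = (n+1)p - m` for
every `k`. Conversely, for `k ≥ n` the positive definite `M_S(n)`, of rank `(n+1)p`, is a
principal submatrix of `M_S̃(k) + M_t(k)`, where `M_t` is the moment matrix of the removed atom,
whence `(n+1)p ≤ rank M_S̃(k) + m`.
-/

open Matrix

/-- The `k`-th truncated moment matrix of `S`: the `(i,j)`-th `p × p` block is
`S (i + j)` for `0 ≤ i, j ≤ k`. -/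
def momentMatrix (p k : ℕ) (S : ℕ → Matrix (Fin p) (Fin p) ℝ) :
    Matrix (Fin (k + 1) × Fin p) (Fin (k + 1) × Fin p) ℝ :=
  fun i j => S (i.1.1 + j.1.1) i.2 j.2

namespace Matrix

variable {K m n ι : Type*} [Field K] [Fintype n]

theorem rank_add_le (A B : Matrix m n K) : (A + B).rank ≤ A.rank + B.rank := by
  have hrange : LinearMap.range (A + B).mulVecLin ≤
      LinearMap.range A.mulVecLin ⊔ LinearMap.range B.mulVecLin := by
    rintro _ ⟨v, rfl⟩
    rw [mulVecLin_add]
    exact Submodule.add_mem_sup (LinearMap.mem_range_self _ v) (LinearMap.mem_range_self _ v)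
  exact (Submodule.finrank_mono hrange).trans (Submodule.finrank_add_le_finrank_add_finrank _ _)

theorem rank_finsetSum_le (s : Finset ι) (A : ι → Matrix m n K) :
    (∑ j ∈ s, A j).rank ≤ ∑ j ∈ s, (A j).rank :=
  Finset.sum_hom_rel (r := fun (M : Matrix m n K) k => M.rank ≤ k) (by simp [rank_zero]) fun _ _ _ h => (rank_add_le _ _).trans (by gcongr)

end Matrix

section MomentMatrix

variable {p : ℕ}

theorem momentMatrix_congr {k : ℕ} {S T : ℕ → Matrix (Fin p) (Fin p) ℝ}
    (h : ∀ i ≤ 2 * k, S i = T i) : momentMatrix p k S = momentMatrix p k T := by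
  ext q r
  rw [momentMatrix, momentMatrix, h _ (by omega)]

theorem momentMatrix_add (k : ℕ) (S T : ℕ → Matrix (Fin p) (Fin p) ℝ) :
    momentMatrix p k (fun i => S i + T i) = momentMatrix p k S + momentMatrix p k T :=
  rfl

theorem momentMatrix_finsetSum {ι : Type*} (k : ℕ) (s : Finset ι)
    (S : ι → ℕ → Matrix (Fin p) (Fin p) ℝ) :
    momentMatrix p k (fun i => ∑ j ∈ s, S j i) = ∑ j ∈ s, momentMatrix p k (S j) := by
  ext q r
  simp [momentMatrix, Matrix.sum_apply]

theorem momentMatrix_eq_submatrix {k k' : ℕ} (hk : k ≤ k') (S : ℕ → Matrix (Fin p) (Fin p) ℝ) :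
    momentMatrix p k S = (momentMatrix p k' S).submatrix
      (fun q => (Fin.castLE (by omega) q.1, q.2)) (fun q => (Fin.castLE (by omega) q.1, q.2)) :=
  rfl

theorem rank_momentMatrix_mono {k k' : ℕ} (hk : k ≤ k') (S : ℕ → Matrix (Fin p) (Fin p) ℝ) :
    (momentMatrix p k S).rank ≤ (momentMatrix p k' S).rank := by
  rw [momentMatrix_eq_submatrix hk]
  exact rank_submatrix_le _ _ _

theorem rank_momentMatrix_of_posDef {k : ℕ} {S : ℕ → Matrix (Fin p) (Fin p) ℝ}
    (hS : (momentMatrix p k S).PosDef) : (momentMatrix p k S).rank = (k + 1) * p := by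
  simp [rank_of_isUnit _ hS.isUnit]

theorem momentMatrix_smul_pow (k : ℕ) (c : ℝ) (A : Matrix (Fin p) (Fin p) ℝ) :
    momentMatrix p k (fun i => c ^ i • A) =
      of (fun q b => c ^ (q.1 : ℕ) * (1 : Matrix (Fin p) (Fin p) ℝ) q.2 b) * A *
        (of fun q b => c ^ (q.1 : ℕ) * (1 : Matrix (Fin p) (Fin p) ℝ) q.2 b)ᵀ := by
  ext q r
  simp [momentMatrix, mul_apply, one_apply, pow_add]
  ring

theorem rank_momentMatrix_smul_pow_le (k : ℕ) (c : ℝ) (A : Matrix (Fin p) (Fin p) ℝ) :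
    (momentMatrix p k (fun i => c ^ i • A)).rank ≤ A.rank := by
  rw [momentMatrix_smul_pow]
  exact (rank_mul_le_left _ _).trans (rank_mul_le_right _ _)

theorem rank_momentMatrix_finsetSum_smul_pow_le {ι : Type*} (k : ℕ) (s : Finset ι) (x : ι → ℝ)
    (A : ι → Matrix (Fin p) (Fin p) ℝ) :
    (momentMatrix p k (fun i => ∑ j ∈ s, x j ^ i • A j)).rank ≤ ∑ j ∈ s, (A j).rank := by
  rw [momentMatrix_finsetSum]
  exact (rank_finsetSum_le _ _).trans
    (Finset.sum_le_sum fun j _ => rank_momentMatrix_smul_pow_le k (x j) (A j))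

end MomentMatrix

theorem rank_moment_matrix_of_removed_atom_general (p n ℓ : ℕ)
    (S : ℕ → Matrix (Fin p) (Fin p) ℝ)
    (hM : (momentMatrix p n S).PosDef)
    (x : Fin (ℓ + 1) → ℝ) (A : Fin (ℓ + 1) → Matrix (Fin p) (Fin p) ℝ)
    (hrep : ∀ i ≤ 2 * n, S i = ∑ j, x j ^ i • A j)
    (hrank : (∑ j, (A j).rank) = (n + 1) * p)
    (m : ℕ) (hA0 : (A 0).rank = m) :
    (momentMatrix p n
        (fun i => ∑ j ∈ Finset.univ.erase 0, x j ^ i • A j)).rank + m = (n + 1) * p ∧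
    (momentMatrix p (n + 1)
        (fun i => ∑ j ∈ Finset.univ.erase 0, x j ^ i • A j)).rank + m = (n + 1) * p := by
  set S' := fun i => ∑ j ∈ Finset.univ.erase 0, x j ^ i • A j
  have hsplit (k : ℕ) : momentMatrix p k (fun i => ∑ j, x j ^ i • A j) =
      momentMatrix p k (fun i => x 0 ^ i • A 0) + momentMatrix p k S' := by
    rw [← momentMatrix_add]
    congr with i : 1
    exact (Finset.add_sum_erase _ (fun j => x j ^ i • A j) (Finset.mem_univ 0)).symm
  have hupper (k : ℕ) : (momentMatrix p k S').rank + m ≤ (n + 1) * p := by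
    rw [← hrank, ← Finset.sum_erase_add _ _ (Finset.mem_univ 0), hA0]
    gcongr
    exact rank_momentMatrix_finsetSum_smul_pow_le _ _ _ _
  have hlower (k : ℕ) (hk : n ≤ k) : (n + 1) * p ≤ (momentMatrix p k S').rank + m := calc
    (n + 1) * p = (momentMatrix p n (fun i => ∑ j, x j ^ i • A j)).rank := by
      rw [← momentMatrix_congr hrep, rank_momentMatrix_of_posDef hM]
    _ ≤ (momentMatrix p k (fun i => ∑ j, x j ^ i • A j)).rank := rank_momentMatrix_mono hk _
    _ ≤ m + (momentMatrix p k S').rank := by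
      rw [hsplit, ← hA0]
      exact (rank_add_le _ _).trans (by gcongr; exact rank_momentMatrix_smul_pow_le _ _ _)
    _ = (momentMatrix p k S').rank + m := add_comm _ _
  exact ⟨(hupper n).antisymm (hlower n le_rfl), (hupper (n + 1)).antisymm (hlower _ n.le_succ)⟩

/-- Equations (3.4) in the proof of Theorem 1.1: removing the atom `t = x₀` of mass rank `m`
from a minimal representing measure yields a sequence `S̃` with
`rank M_S̃(n) = rank M_S̃(n+1) = (n+1)p - m`. -/
theorem rank_moment_matrix_of_removed_atom (p n ℓ : ℕ) (hp : 1 ≤ p) (hn : 1 ≤ n)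
    (S : ℕ → Matrix (Fin p) (Fin p) ℝ)
    (hSsym : ∀ i ≤ 2 * n, (S i).IsSymm)
    (hM : (momentMatrix p n S).PosDef)
    (x : Fin (ℓ + 1) → ℝ) (A : Fin (ℓ + 1) → Matrix (Fin p) (Fin p) ℝ)
    (hinj : Function.Injective x)
    (hA : ∀ j, A j ≠ 0 ∧ (A j).PosSemidef)
    (hrep : ∀ i ≤ 2 * n, S i = ∑ j, x j ^ i • A j)
    (hrank : (∑ j, (A j).rank) = (n + 1) * p)
    (t : ℝ) (m : ℕ) (hx0 : x 0 = t) (hA0 : (A 0).rank = m) :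
    (momentMatrix p n
        (fun i => ∑ j ∈ Finset.univ.erase 0, x j ^ i • A j)).rank + m = (n + 1) * p ∧
    (momentMatrix p (n + 1)
        (fun i => ∑ j ∈ Finset.univ.erase 0, x j ^ i • A j)).rank + m = (n + 1) * p :=
  rank_moment_matrix_of_removed_atom_general p n ℓ S hM x A hrep hrank m hA0
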